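/- arXiv:1604.05478 — 4 statements merged into one kernel-verified Lean document; each statement's English description precedes it below -/
import Mathlib

section
/- Fix θ = (φ, ρ11, ρ12, ρ21, ρ22) ∈ ℝ^5. There exists a real constant C such that: (i) C ≤ λ_min(Q̃_{n1,n2}(θ)) for all integers n1, n2 ≥ 3; and (ii) for every ε > 0 there exists N ≥ 3 such that |λ_min(Q̃_{n1,n2}(θ)) − C| < ε for all n1, n2 ≥ N. (The smallest eigenvalues of the block-circulant approximations are uniformly bounded below by a constant to which they converge as n1, n2 → ∞.) -/
open Matrix

/-- Smallest element of the real spectrum of a real (symmetric) matrix. -/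
noncomputable def lamMin {m : Type} [Fintype m] [DecidableEq m] (M : Matrix m m ℝ) : ℝ :=
  sInf (spectrum ℝ M)

/-- Block-Toeplitz block `T_{n1,n2}(x,y,z)`, indexed by pairs `(a,b)` with
`a ∈ Fin n2`, `b ∈ Fin n1`. -/
def Tmat (n1 n2 : ℕ) (x y z : ℝ) :
    Matrix (Fin n2 × Fin n1) (Fin n2 × Fin n1) ℝ := fun p q =>
  if q = p then y
  else if (q.1 = p.1 ∧ (q.2 : ℕ) = (p.2 : ℕ) + 1) ∨ (q.2 = p.2 ∧ (q.1 : ℕ) = (p.1 : ℕ) + 1) then z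
  else if (q.1 = p.1 ∧ (q.2 : ℕ) + 1 = (p.2 : ℕ)) ∨ (q.2 = p.2 ∧ (q.1 : ℕ) + 1 = (p.1 : ℕ)) then x
  else 0

/-- Block-circulant block `C_{n1,n2}(x,y,z)`. -/
def Cmat (n1 n2 : ℕ) (x y z : ℝ) :
    Matrix (Fin n2 × Fin n1) (Fin n2 × Fin n1) ℝ := fun p q =>
  if q = p then y
  else if (q.1 = p.1 ∧ (q.2 : ℕ) = ((p.2 : ℕ) + 1) % n1) ∨
          (q.2 = p.2 ∧ (q.1 : ℕ) = ((p.1 : ℕ) + 1) % n2) then z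
  else if (q.1 = p.1 ∧ ((q.2 : ℕ) + 1) % n1 = (p.2 : ℕ)) ∨
          (q.2 = p.2 ∧ ((q.1 : ℕ) + 1) % n2 = (p.1 : ℕ)) then x
  else 0

/-- The precision matrix `Q_{n1,n2}(θ)`, `θ = (φ, ρ11, ρ12, ρ21, ρ22)`. -/
def Qmat (n1 n2 : ℕ) (φ ρ11 ρ12 ρ21 ρ22 : ℝ) :
    Matrix ((Fin n2 × Fin n1) ⊕ (Fin n2 × Fin n1)) ((Fin n2 × Fin n1) ⊕ (Fin n2 × Fin n1)) ℝ :=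
  Matrix.fromBlocks (Tmat n1 n2 ρ11 1 ρ11) (Tmat n1 n2 ρ21 φ ρ12)
    (Tmat n1 n2 ρ21 φ ρ12)ᵀ (Tmat n1 n2 ρ22 1 ρ22)

/-- The block-circulant (toroidal) approximation `Q̃_{n1,n2}(θ)`. -/
def Qcmat (n1 n2 : ℕ) (φ ρ11 ρ12 ρ21 ρ22 : ℝ) :
    Matrix ((Fin n2 × Fin n1) ⊕ (Fin n2 × Fin n1)) ((Fin n2 × Fin n1) ⊕ (Fin n2 × Fin n1)) ℝ :=
  Matrix.fromBlocks (Cmat n1 n2 ρ11 1 ρ11) (Cmat n1 n2 ρ21 φ ρ12)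
    (Cmat n1 n2 ρ21 φ ρ12)ᵀ (Cmat n1 n2 ρ22 1 ρ22)

/-!
The matrix `Q̃` is a `2 × 2` block matrix whose blocks are circulants on the discrete torus
`Fin n2 × Fin n1`. All four blocks are diagonalised by the same Fourier matrix, so
`det (r - Q̃)` factors over the frequencies `κ` into the characteristic polynomials of the
`2 × 2` Hermitian symbols `[[a, b], [conj b, d]]` of `Q̃` at the grid point
`(2πκ₂/n1, 2πκ₁/n2)`. Hence `λ_min(Q̃)` is the minimum over that grid of the continuous function
`F = (a + d)/2 - √(((a - d)/2)² + |b|²)` on `[0, 2π]²`. The constant is `C = min F`: it lies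
below every grid minimum, and since the grid has mesh `2π / min n1 n2`, continuity of `F` at a
minimiser makes the grid minima converge to `C`.
-/

open Complex Real
open scoped Kronecker

theorem Matrix.det_fromBlocks_diagonal {R I : Type*} [CommRing R] [Fintype I] [DecidableEq I]
    (a b c d : I → R) :
    (fromBlocks (diagonal a) (diagonal b) (diagonal c) (diagonal d)).det =
      ∏ i, (a i * d i - b i * c i) := by
  let e : Fin 2 × I ≃ I ⊕ I :=
    (finTwoEquiv.prodCongr (Equiv.refl I)).trans (Equiv.boolProdEquivSum I)
  have h : (fromBlocks (diagonal a) (diagonal b) (diagonal c) (diagonal d)).submatrix e e =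
      blockDiagonal fun i => !![a i, b i; c i, d i] := by
    ext ⟨k, i⟩ ⟨l, j⟩
    fin_cases k <;> fin_cases l <;> by_cases hij : i = j <;>
      simp [e, finTwoEquiv, blockDiagonal_apply, hij]
  rw [← det_submatrix_equiv_self e, h, det_blockDiagonal]
  simp [det_fin_two]

theorem Matrix.mem_spectrum_iff_det_smul_one_sub {K n : Type*} [Field K] [Fintype n]
    [DecidableEq n] (M : Matrix n n K) (r : K) : r ∈ spectrum K M ↔ (r • 1 - M).det = 0 := by
  rw [spectrum.mem_iff, Algebra.algebraMap_eq_smul_one, isUnit_iff_isUnit_det, isUnit_iff_ne_zero,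
    not_not]

theorem Matrix.det_smul_one_sub_eq_of_mul_eq_mul {R n : Type*} [CommRing R] [Fintype n]
    [DecidableEq n] {M U B : Matrix n n R} (hU : IsUnit U.det) (h : M * U = U * B) (r : R) :
    (r • 1 - M).det = (r • 1 - B).det := by
  have hconj : (r • 1 - M) * U = U * (r • 1 - B) := by
    rw [sub_mul, mul_sub, h, smul_mul_assoc, one_mul, mul_smul_comm, mul_one]
  have := congrArg det hconj
  rw [det_mul, det_mul, mul_comm _ U.det] at this
  exact hU.mul_left_cancel this

theorem Matrix.det_smul_one_sub_fromBlocks_of_mul_eq_mul_diagonal {R n : Type*} [CommRing R]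
    [Fintype n] [DecidableEq n] {W A B C D : Matrix n n R} {a b c d : n → R} (hW : IsUnit W.det)
    (hA : A * W = W * diagonal a) (hB : B * W = W * diagonal b) (hC : C * W = W * diagonal c)
    (hD : D * W = W * diagonal d) (r : R) :
    (r • 1 - fromBlocks A B C D).det = ∏ i, ((r - a i) * (r - d i) - b i * c i) := by
  have hU : IsUnit (fromBlocks W 0 0 W).det := by
    rw [det_fromBlocks_zero₂₁]
    exact hW.mul hW
  have hMU : fromBlocks A B C D * fromBlocks W 0 0 W =
      fromBlocks W 0 0 W * fromBlocks (diagonal a) (diagonal b) (diagonal c) (diagonal d) := by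
    simp [fromBlocks_multiply, hA, hB, hC, hD]
  rw [det_smul_one_sub_eq_of_mul_eq_mul hU hMU, ← fromBlocks_one, fromBlocks_smul, sub_eq_add_neg,
    fromBlocks_neg, fromBlocks_add, smul_zero, zero_add, zero_add, smul_one_eq_diagonal,
    diagonal_neg, diagonal_neg, diagonal_neg, diagonal_neg, diagonal_add, diagonal_add,
    det_fromBlocks_diagonal]
  simp only [neg_mul_neg, sub_eq_add_neg]

namespace Fin

variable {n : ℕ} [NeZero n]

theorem val_eq_add_one_mod_iff {i j : Fin n} : (i : ℕ) = ((j : ℕ) + 1) % n ↔ i = j + 1 := by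
  rw [Fin.ext_iff, Fin.val_add, Fin.val_one', Nat.add_mod_mod]

theorem add_one_mod_eq_val_iff {i j : Fin n} : ((i : ℕ) + 1) % n = j ↔ i = j - 1 := by
  rw [eq_sub_iff_add_eq, Fin.ext_iff, Fin.val_add, Fin.val_one', Nat.add_mod_mod]

theorem add_one_ne_self (hn : 2 ≤ n) (i : Fin n) : i + 1 ≠ i := by
  intro h
  have : (1 : Fin n) = 0 := by simpa using h
  rw [Fin.ext_iff, Fin.val_one', Fin.val_zero, Nat.one_mod_eq_zero_iff] at this
  omega

theorem sub_one_ne_self (hn : 2 ≤ n) (i : Fin n) : i - 1 ≠ i := fun h =>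
  add_one_ne_self hn (i - 1) (by rw [sub_add_cancel, h])

theorem add_one_ne_sub_one (hn : 3 ≤ n) (i : Fin n) : i + 1 ≠ i - 1 := by
  intro h
  have : (1 + 1 : Fin n) = 0 := by
    have h2 := congrArg (· + 1) h
    simp only [sub_add_cancel, add_assoc] at h2
    exact add_eq_left.mp h2
  rw [Fin.ext_iff, Fin.val_add, Fin.val_one', Fin.val_zero, Nat.mod_eq_of_lt (by omega : 1 < n),
    Nat.mod_eq_of_lt (by omega : 2 < n)] at this
  omega

end Fin

theorem pow_val_add_one {M : Type*} [Monoid M] {n : ℕ} [NeZero n] {ω : M} (hω : ω ^ n = 1)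
    (i : Fin n) : ω ^ ((i + 1 : Fin n) : ℕ) = ω * ω ^ (i : ℕ) := by
  rw [Fin.val_add, Fin.val_one', Nat.add_mod_mod, ← pow_eq_pow_mod _ hω, pow_succ']

theorem pow_val_sub_one {G₀ : Type*} [GroupWithZero G₀] {n : ℕ} [NeZero n] {ω : G₀}
    (hω : ω ^ n = 1) (i : Fin n) : ω ^ ((i - 1 : Fin n) : ℕ) = ω⁻¹ * ω ^ (i : ℕ) := by
  have hω₀ : ω ≠ 0 := fun h => by simp [h, zero_pow (NeZero.ne n)] at hω
  rw [eq_inv_mul_iff_mul_eq₀ hω₀, ← pow_val_add_one hω, sub_add_cancel]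

noncomputable def gridAngle (n k : ℕ) : ℝ := 2 * π * k / n

theorem gridAngle_mem_Icc {n k : ℕ} (hk : k ≤ n) : gridAngle n k ∈ Set.Icc 0 (2 * π) := by
  rcases Nat.eq_zero_or_pos n with rfl | hn
  · simp [gridAngle, pi_pos.le]
  refine ⟨by unfold gridAngle; positivity, ?_⟩
  rw [gridAngle, div_le_iff₀ (by positivity)]
  gcongr

theorem exists_abs_gridAngle_sub_le {n : ℕ} (hn : n ≠ 0) {t : ℝ} (ht : t ∈ Set.Icc 0 (2 * π)) :
    ∃ k : Fin n, |gridAngle n k - t| ≤ 2 * π / n := by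
  have hn' : (0 : ℝ) < n := by positivity
  set x := t * n / (2 * π) with hx
  have hx0 : 0 ≤ x := by have := ht.1; positivity
  have hxn : x ≤ n := by
    rw [hx, div_le_iff₀ (by positivity)]
    nlinarith [ht.2]
  -- clamping at `n - 1` covers `t = 2π`, where `⌊x⌋₊ = n` is not an index
  refine ⟨⟨min ⌊x⌋₊ (n - 1), by omega⟩, ?_⟩
  have hk : |((min ⌊x⌋₊ (n - 1) : ℕ) : ℝ) - x| ≤ 1 := by
    rcases le_total ⌊x⌋₊ (n - 1) with h | h
    · rw [min_eq_left h, abs_le]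
      constructor <;> linarith [Nat.lt_floor_add_one x, Nat.floor_le hx0]
    · rw [min_eq_right h, Nat.cast_sub (by omega), Nat.cast_one, abs_le]
      have : ((n - 1 : ℕ) : ℝ) ≤ x := (Nat.cast_le.2 h).trans (Nat.floor_le hx0)
      rw [Nat.cast_sub (by omega), Nat.cast_one] at this
      constructor <;> linarith
  have hdiff : gridAngle n (min ⌊x⌋₊ (n - 1)) - t =
      2 * π / n * ((min ⌊x⌋₊ (n - 1) : ℕ) - x) := by
    rw [gridAngle, hx]
    field_simp
  rw [hdiff, abs_mul, abs_of_pos (by positivity)]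
  exact mul_le_of_le_one_right (by positivity) hk

theorem cexp_gridAngle (n k : ℕ) : cexp (gridAngle n k * I) = cexp (2 * π * I / n) ^ k := by
  rw [← Complex.exp_nat_mul, gridAngle]
  congr 1
  push_cast
  ring

theorem cexp_gridAngle_pow_self {n : ℕ} (hn : n ≠ 0) (k : ℕ) :
    cexp (gridAngle n k * I) ^ n = 1 := by
  rw [cexp_gridAngle, ← pow_mul, mul_comm k, pow_mul, (isPrimitiveRoot_exp n hn).pow_eq_one,
    one_pow]

theorem injective_cexp_gridAngle {n : ℕ} (hn : n ≠ 0) :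
    Function.Injective fun k : Fin n => cexp (gridAngle n k * I) := by
  intro i j h
  simp only [cexp_gridAngle] at h
  exact Fin.ext ((isPrimitiveRoot_exp n hn).pow_inj i.2 j.2 h)

noncomputable def torusGrid {n1 n2 : ℕ} (κ : Fin n2 × Fin n1) : ℝ × ℝ :=
  (gridAngle n1 κ.2, gridAngle n2 κ.1)

theorem torusGrid_mem {n1 n2 : ℕ} (κ : Fin n2 × Fin n1) :
    torusGrid κ ∈ Set.Icc 0 (2 * π) ×ˢ Set.Icc 0 (2 * π) :=
  ⟨gridAngle_mem_Icc κ.2.2.le, gridAngle_mem_Icc κ.1.2.le⟩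

theorem exists_dist_torusGrid_le {N n1 n2 : ℕ} (hN : 0 < N) (h1 : N ≤ n1) (h2 : N ≤ n2)
    {ω : ℝ × ℝ} (hω : ω ∈ Set.Icc 0 (2 * π) ×ˢ Set.Icc 0 (2 * π)) :
    ∃ κ : Fin n2 × Fin n1, dist (torusGrid κ) ω ≤ 2 * π / N := by
  obtain ⟨k1, hk1⟩ := exists_abs_gridAngle_sub_le (by omega : n1 ≠ 0) hω.1
  obtain ⟨k2, hk2⟩ := exists_abs_gridAngle_sub_le (by omega : n2 ≠ 0) hω.2
  have hmesh : ∀ {n : ℕ}, N ≤ n → 2 * π / n ≤ 2 * π / N := fun h =>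
    div_le_div_of_nonneg_left (by positivity) (by exact_mod_cast hN) (by exact_mod_cast h)
  refine ⟨(k2, k1), max_le ?_ ?_⟩
  · exact (Real.dist_eq _ _ ▸ hk1).trans (hmesh h1)
  · exact (Real.dist_eq _ _ ▸ hk2).trans (hmesh h2)

/-- The columns are the characters `p ↦ e^{2πi (κ₁ p₁ / n2 + κ₂ p₂ / n1)}` of the torus. -/
noncomputable def fourierMatrix (n1 n2 : ℕ) : Matrix (Fin n2 × Fin n1) (Fin n2 × Fin n1) ℂ :=
  (vandermonde fun k : Fin n2 => cexp (gridAngle n2 k * I))ᵀ ⊗ₖ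
    (vandermonde fun k : Fin n1 => cexp (gridAngle n1 k * I))ᵀ

theorem det_fourierMatrix_ne_zero {n1 n2 : ℕ} (h1 : n1 ≠ 0) (h2 : n2 ≠ 0) :
    (fourierMatrix n1 n2).det ≠ 0 := by
  rw [fourierMatrix, det_kronecker, det_transpose, det_transpose]
  exact mul_ne_zero (pow_ne_zero _ (det_vandermonde_ne_zero_iff.2 (injective_cexp_gridAngle h2)))
    (pow_ne_zero _ (det_vandermonde_ne_zero_iff.2 (injective_cexp_gridAngle h1)))

/-- The eigenvalue of `Cmat n1 n2 x y z` on the Fourier character of frequency `ω`. -/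
noncomputable def torusSymbol (x y z : ℝ) (ω : ℝ × ℝ) : ℂ :=
  y + z * (cexp (ω.1 * I) + cexp (ω.2 * I)) + x * (cexp (-(ω.1 * I)) + cexp (-(ω.2 * I)))

theorem conj_torusSymbol (x y z : ℝ) (ω : ℝ × ℝ) :
    (starRingEnd ℂ) (torusSymbol x y z ω) = torusSymbol z y x ω := by
  simp only [torusSymbol, map_add, map_mul, conj_ofReal, ← Complex.exp_conj, map_neg, conj_I,
    mul_neg, neg_neg]
  ring

theorem ofReal_re_torusSymbol_self (x y : ℝ) (ω : ℝ × ℝ) :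
    ((torusSymbol x y x ω).re : ℂ) = torusSymbol x y x ω :=
  conj_eq_iff_re.1 (conj_torusSymbol x y x ω)

theorem continuous_torusSymbol (x y z : ℝ) : Continuous (torusSymbol x y z) := by
  unfold torusSymbol
  fun_prop

section Circulant

variable {n1 n2 : ℕ} [NeZero n1] [NeZero n2]

theorem Cmat_apply (h1 : 3 ≤ n1) (h2 : 3 ≤ n2) (x y z : ℝ) (p q : Fin n2 × Fin n1) :
    Cmat n1 n2 x y z p q =
      (if q = p then y else 0) + (if q = (p.1, p.2 + 1) then z else 0) +
        (if q = (p.1 + 1, p.2) then z else 0) + (if q = (p.1, p.2 - 1) then x else 0) +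
        (if q = (p.1 - 1, p.2) then x else 0) := by
  obtain ⟨a, b⟩ := p
  obtain ⟨a', b'⟩ := q
  have := Fin.add_one_ne_self (by omega) a
  have := Fin.add_one_ne_self (by omega) b
  have := Fin.sub_one_ne_self (by omega) a
  have := Fin.sub_one_ne_self (by omega) b
  have := Fin.add_one_ne_sub_one h2 a
  have := Fin.add_one_ne_sub_one h1 b
  simp only [Cmat, Fin.val_eq_add_one_mod_iff, Fin.add_one_mod_eq_val_iff, Prod.mk.injEq]
  split_ifs <;> simp_all

theorem Cmat_transpose (h1 : 3 ≤ n1) (h2 : 3 ≤ n2) (x y z : ℝ) :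
    (Cmat n1 n2 x y z)ᵀ = Cmat n1 n2 z y x := by
  ext p q
  rw [transpose_apply, Cmat_apply h1 h2, Cmat_apply h1 h2]
  simp only [Prod.ext_iff, eq_sub_iff_add_eq, ← sub_eq_iff_eq_add, eq_comm (a := p.1),
    eq_comm (a := p.2)]
  ring

theorem Cmat_map_mul_fourierMatrix (h1 : 3 ≤ n1) (h2 : 3 ≤ n2) (x y z : ℝ) :
    (Cmat n1 n2 x y z).map ofReal * fourierMatrix n1 n2 =
      fourierMatrix n1 n2 * diagonal fun κ => torusSymbol x y z (torusGrid κ) := by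
  ext p κ
  rw [mul_diagonal, mul_apply]
  simp only [map_apply, Cmat_apply h1 h2, ofReal_add, apply_ite ofReal, ofReal_zero, add_mul,
    ite_mul, zero_mul, Finset.sum_add_distrib, Finset.sum_ite_eq', Finset.mem_univ, if_true]
  simp only [fourierMatrix, kroneckerMap_apply, transpose_apply, vandermonde_apply,
    pow_val_add_one (cexp_gridAngle_pow_self (NeZero.ne _) _),
    pow_val_sub_one (cexp_gridAngle_pow_self (NeZero.ne _) _)]
  simp only [torusSymbol, torusGrid, Complex.exp_neg]
  ring

end Circulant

/-- The smaller root of `(r - a) * (r - d) = s`; for `s = |b|²` it is the smaller eigenvalue of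
the Hermitian matrix `[[a, b], [conj b, d]]`. -/
noncomputable def lowerRoot (a d s : ℝ) : ℝ := (a + d) / 2 - √(((a - d) / 2) ^ 2 + s)

theorem lowerRoot_le {a d s r : ℝ} (h : (r - a) * (r - d) = s) : lowerRoot a d s ≤ r := by
  have hD : ((a - d) / 2) ^ 2 + s = (r - (a + d) / 2) ^ 2 := by rw [← h]; ring
  rw [lowerRoot, hD, Real.sqrt_sq_eq_abs]
  linarith [neg_abs_le (r - (a + d) / 2)]

theorem lowerRoot_sub_mul_sub {a d s : ℝ} (hs : 0 ≤ s) :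
    (lowerRoot a d s - a) * (lowerRoot a d s - d) = s := by
  rw [lowerRoot]
  linear_combination Real.sq_sqrt (by positivity : 0 ≤ ((a - d) / 2) ^ 2 + s)

/-- The smallest eigenvalue of the `2 × 2` symbol of `Qcmat` at frequency `ω`. -/
noncomputable def symbolLamMin (φ ρ11 ρ12 ρ21 ρ22 : ℝ) (ω : ℝ × ℝ) : ℝ :=
  lowerRoot (torusSymbol ρ11 1 ρ11 ω).re (torusSymbol ρ22 1 ρ22 ω).re
    (normSq (torusSymbol ρ21 φ ρ12 ω))

theorem continuous_symbolLamMin (φ ρ11 ρ12 ρ21 ρ22 : ℝ) :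
    Continuous (symbolLamMin φ ρ11 ρ12 ρ21 ρ22) := by
  have := continuous_torusSymbol
  unfold symbolLamMin lowerRoot
  fun_prop

section Spectrum

variable {n1 n2 : ℕ} (φ ρ11 ρ12 ρ21 ρ22 : ℝ)

theorem det_smul_one_sub_map_Qcmat [NeZero n1] [NeZero n2] (h1 : 3 ≤ n1) (h2 : 3 ≤ n2) (r : ℂ) :
    (r • 1 - (Qcmat n1 n2 φ ρ11 ρ12 ρ21 ρ22).map ofReal).det =
      ∏ κ : Fin n2 × Fin n1,
        ((r - torusSymbol ρ11 1 ρ11 (torusGrid κ)) * (r - torusSymbol ρ22 1 ρ22 (torusGrid κ)) -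
          torusSymbol ρ21 φ ρ12 (torusGrid κ) * torusSymbol ρ12 φ ρ21 (torusGrid κ)) := by
  rw [Qcmat, Cmat_transpose h1 h2, fromBlocks_map]
  exact det_smul_one_sub_fromBlocks_of_mul_eq_mul_diagonal
    (det_fourierMatrix_ne_zero (NeZero.ne n1) (NeZero.ne n2)).isUnit
    (Cmat_map_mul_fourierMatrix h1 h2 _ _ _) (Cmat_map_mul_fourierMatrix h1 h2 _ _ _)
    (Cmat_map_mul_fourierMatrix h1 h2 _ _ _) (Cmat_map_mul_fourierMatrix h1 h2 _ _ _) r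

theorem mem_spectrum_Qcmat_iff [NeZero n1] [NeZero n2] (h1 : 3 ≤ n1) (h2 : 3 ≤ n2) (r : ℝ) :
    r ∈ spectrum ℝ (Qcmat n1 n2 φ ρ11 ρ12 ρ21 ρ22) ↔
      ∃ κ : Fin n2 × Fin n1, (r - (torusSymbol ρ11 1 ρ11 (torusGrid κ)).re) *
        (r - (torusSymbol ρ22 1 ρ22 (torusGrid κ)).re) =
          normSq (torusSymbol ρ21 φ ρ12 (torusGrid κ)) := by
  have hmap : ofRealHom.mapMatrix (r • 1 - Qcmat n1 n2 φ ρ11 ρ12 ρ21 ρ22) =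
      (r : ℂ) • 1 - (Qcmat n1 n2 φ ρ11 ρ12 ρ21 ρ22).map ofReal := by
    ext i j
    simp [one_apply, apply_ite]
  rw [mem_spectrum_iff_det_smul_one_sub, ← ofReal_eq_zero, ← ofRealHom_eq_coe, RingHom.map_det,
    hmap, det_smul_one_sub_map_Qcmat _ _ _ _ _ h1 h2, Finset.prod_eq_zero_iff]
  simp only [Finset.mem_univ, true_and]
  refine exists_congr fun κ => ?_
  rw [← conj_torusSymbol ρ21 φ ρ12, mul_conj, ← ofReal_re_torusSymbol_self ρ11,
    ← ofReal_re_torusSymbol_self ρ22, ← sub_eq_zero (b := normSq _)]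
  norm_cast

theorem lamMin_Qcmat (h1 : 3 ≤ n1) (h2 : 3 ≤ n2) :
    lamMin (Qcmat n1 n2 φ ρ11 ρ12 ρ21 ρ22) =
      ⨅ κ : Fin n2 × Fin n1, symbolLamMin φ ρ11 ρ12 ρ21 ρ22 (torusGrid κ) := by
  have : NeZero n1 := ⟨by omega⟩
  have : NeZero n2 := ⟨by omega⟩
  apply IsLeast.csInf_eq
  obtain ⟨κ₀, hκ₀⟩ := exists_eq_ciInf_of_finite
    (f := fun κ : Fin n2 × Fin n1 => symbolLamMin φ ρ11 ρ12 ρ21 ρ22 (torusGrid κ))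
  refine ⟨?_, fun r hr => ?_⟩
  · rw [← hκ₀, mem_spectrum_Qcmat_iff _ _ _ _ _ h1 h2]
    exact ⟨κ₀, lowerRoot_sub_mul_sub (normSq_nonneg _)⟩
  · obtain ⟨κ, hκ⟩ := (mem_spectrum_Qcmat_iff _ _ _ _ _ h1 h2 r).1 hr
    exact (ciInf_le (Set.finite_range _).bddBelow κ).trans (lowerRoot_le hκ)

theorem lamMin_Qcmat_le (h1 : 3 ≤ n1) (h2 : 3 ≤ n2) (κ : Fin n2 × Fin n1) :
    lamMin (Qcmat n1 n2 φ ρ11 ρ12 ρ21 ρ22) ≤ symbolLamMin φ ρ11 ρ12 ρ21 ρ22 (torusGrid κ) := by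
  rw [lamMin_Qcmat _ _ _ _ _ h1 h2]
  exact ciInf_le (Set.finite_range _).bddBelow κ

theorem le_lamMin_Qcmat (h1 : 3 ≤ n1) (h2 : 3 ≤ n2) {ω₀ : ℝ × ℝ}
    (hω₀ : IsMinOn (symbolLamMin φ ρ11 ρ12 ρ21 ρ22) (Set.Icc 0 (2 * π) ×ˢ Set.Icc 0 (2 * π)) ω₀) :
    symbolLamMin φ ρ11 ρ12 ρ21 ρ22 ω₀ ≤ lamMin (Qcmat n1 n2 φ ρ11 ρ12 ρ21 ρ22) := by
  have : NeZero n1 := ⟨by omega⟩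
  have : NeZero n2 := ⟨by omega⟩
  rw [lamMin_Qcmat _ _ _ _ _ h1 h2]
  exact le_ciInf fun κ => hω₀ (torusGrid_mem κ)

end Spectrum

/-- The smallest eigenvalues of the block-circulant approximations are uniformly
bounded below by a constant to which they converge as `n1, n2 → ∞`. -/
theorem circulant_min_eigenvalue_limit (φ ρ11 ρ12 ρ21 ρ22 : ℝ) :
    ∃ C : ℝ,
      (∀ n1 n2 : ℕ, 3 ≤ n1 → 3 ≤ n2 → C ≤ lamMin (Qcmat n1 n2 φ ρ11 ρ12 ρ21 ρ22)) ∧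
      (∀ ε > 0, ∃ N : ℕ, 3 ≤ N ∧ ∀ n1 n2 : ℕ, N ≤ n1 → N ≤ n2 →
        |lamMin (Qcmat n1 n2 φ ρ11 ρ12 ρ21 ρ22) - C| < ε) := by
  set F := symbolLamMin φ ρ11 ρ12 ρ21 ρ22
  have hF := continuous_symbolLamMin φ ρ11 ρ12 ρ21 ρ22
  have hIcc : (Set.Icc 0 (2 * π)).Nonempty := Set.nonempty_Icc.2 two_pi_pos.le
  obtain ⟨ω₀, hω₀, hmin⟩ :=
    (isCompact_Icc.prod isCompact_Icc).exists_isMinOn (hIcc.prod hIcc) hF.continuousOn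
  refine ⟨F ω₀, fun n1 n2 h1 h2 => le_lamMin_Qcmat _ _ _ _ _ h1 h2 hmin, fun ε hε => ?_⟩
  obtain ⟨δ, hδ, hFδ⟩ := Metric.continuousAt_iff.1 (hF.continuousAt (x := ω₀)) ε hε
  obtain ⟨N, hN⟩ := exists_nat_gt (2 * π / δ)
  have hmesh : 2 * π / (max N 3 : ℕ) < δ := by
    rw [div_lt_iff₀ hδ] at hN
    rw [div_lt_iff₀ (by positivity)]
    nlinarith [(Nat.cast_le (α := ℝ)).2 (le_max_left N 3)]
  refine ⟨max N 3, le_max_right _ _, fun n1 n2 h1 h2 => ?_⟩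
  obtain ⟨κ, hκ⟩ := exists_dist_torusGrid_le (by omega) h1 h2 hω₀
  have hclose := hFδ (hκ.trans_lt hmesh)
  rw [Real.dist_eq, abs_sub_lt_iff] at hclose
  have hup := lamMin_Qcmat_le φ ρ11 ρ12 ρ21 ρ22 (by omega) (by omega) κ
  have hlow := le_lamMin_Qcmat φ ρ11 ρ12 ρ21 ρ22 (n1 := n1) (n2 := n2) (by omega) (by omega) hmin
  rw [abs_sub_lt_iff]
  constructor <;> linarith
end

section
/- Fix integers n1, n2 ≥ 3 and θ ∈ ℝ^5. For every eigenvalue μ of the real symmetric matrix Q̃_{n1,n2}(θ) there exists a vector u ∈ ℂ^{2n} with Q̃_{n1,n2}(θ)·u = μ·u, Euclidean norm ‖u‖₂ = 1, and |u_k| ≤ √2/√(n1·n2) for every index k. -/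
/-!
`Q̃_{n1,n2}(θ)` is invariant under the action of the torus `ℤ/n2 × ℤ/n1` translating both blocks
of indices simultaneously. The translation operators commute with each other and with `Q̃`, so every
eigenspace of `Q̃` contains a common eigenvector of all translations. Translations permute
coordinates, hence their eigenvalues have modulus one and the entries of such a vector have
constant modulus along each orbit. Orbits have `n1 * n2` elements, so after normalisation every
entry has modulus at most `1 / √(n1 * n2)`.
-/

open Matrix

namespace Fin

variable {n : ℕ} [NeZero n]

theorem val_add_one_mod (a : Fin n) : ((a + 1 : Fin n) : ℕ) = ((a : ℕ) + 1) % n := by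
  rw [Fin.val_add, Fin.val_one', Nat.add_mod_mod]

theorem val_eq_val_add_one_mod_iff {a b : Fin n} : (b : ℕ) = ((a : ℕ) + 1) % n ↔ b = a + 1 := by
  rw [← val_add_one_mod, Fin.val_inj]

theorem val_add_one_mod_eq_val_iff {a b : Fin n} : ((b : ℕ) + 1) % n = a ↔ b + 1 = a := by
  rw [← val_add_one_mod, Fin.val_inj]

end Fin

theorem Cmat_add_add {n1 n2 : ℕ} [NeZero n1] [NeZero n2] (x y z : ℝ) (g p q : Fin n2 × Fin n1) :
    Cmat n1 n2 x y z (g + p) (g + q) = Cmat n1 n2 x y z p q := by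
  simp only [Cmat, Fin.val_eq_val_add_one_mod_iff, Fin.val_add_one_mod_eq_val_iff, Prod.fst_add,
    Prod.snd_add, add_assoc, add_right_inj]

theorem Qcmat_vadd_vadd {n1 n2 : ℕ} [NeZero n1] [NeZero n2] (φ ρ11 ρ12 ρ21 ρ22 : ℝ)
    (g : Fin n2 × Fin n1) (i j : (Fin n2 × Fin n1) ⊕ (Fin n2 × Fin n1)) :
    Qcmat n1 n2 φ ρ11 ρ12 ρ21 ρ22 (g +ᵥ i) (g +ᵥ j) = Qcmat n1 n2 φ ρ11 ρ12 ρ21 ρ22 i j := by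
  cases i <;> cases j <;>
    simp only [Qcmat, Sum.vadd_inl, Sum.vadd_inr, vadd_eq_add, fromBlocks_apply₁₁,
      fromBlocks_apply₁₂, fromBlocks_apply₂₁, fromBlocks_apply₂₂, transpose_apply, Cmat_add_add]

namespace Module.End

variable {ι K V : Type*} [Field K] [IsAlgClosed K] [AddCommGroup V] [Module K V]
  [FiniteDimensional K V]

theorem exists_common_eigenvector_mem [Finite ι] (f : ι → End K V)
    (hf : ∀ i j, Commute (f i) (f j)) {W : Submodule K V} (hW : W ≠ ⊥)
    (hWf : ∀ i, Set.MapsTo (f i) W W) :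
    ∃ v ∈ W, v ≠ 0 ∧ ∀ i, ∃ c : K, f i v = c • v := by
  classical
  have : Fintype ι := Fintype.ofFinite ι
  suffices h : ∀ s : Finset ι, ∃ U ≤ W, U ≠ ⊥ ∧ (∀ i, Set.MapsTo (f i) U U) ∧
      ∀ i ∈ s, ∃ c, U ≤ (f i).eigenspace c by
    obtain ⟨U, hUW, hU, -, hs⟩ := h Finset.univ
    obtain ⟨v, hvU, hv⟩ := Submodule.exists_mem_ne_zero_of_ne_bot hU
    refine ⟨v, hUW hvU, hv, fun i => ?_⟩
    obtain ⟨c, hc⟩ := hs i (Finset.mem_univ i)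
    exact ⟨c, mem_eigenspace_iff.1 (hc hvU)⟩
  intro s
  induction s using Finset.induction_on with
  | empty => exact ⟨W, le_rfl, hW, hWf, by simp⟩
  | insert j s _ ih =>
    obtain ⟨U, hUW, hU, hUf, hs⟩ := ih
    have : Nontrivial U := Submodule.nontrivial_iff_ne_bot.2 hU
    obtain ⟨c, hc⟩ := exists_eigenvalue ((f j).restrict (hUf j))
    refine ⟨U ⊓ (f j).eigenspace c, inf_le_left.trans hUW, ?_, fun i => ?_, ?_⟩
    · rw [Submodule.inf_genEigenspace _ _ (hUf j), Ne, ← Submodule.map_bot U.subtype,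
        (Submodule.map_injective_of_injective U.injective_subtype).eq_iff]
      exact hc
    · rw [Submodule.coe_inf]
      exact (hUf i).inter_inter (mapsTo_genEigenspace_of_comm (hf j i) c 1)
    · simp only [Finset.mem_insert, forall_eq_or_imp]
      exact ⟨⟨c, inf_le_right⟩, fun i hi => (hs i hi).imp fun _ h => inf_le_left.trans h⟩

end Module.End

theorem Matrix.hasEigenvalue_toLin'_map_ofReal_of_mem_spectrum {κ : Type*} [Fintype κ]
    [DecidableEq κ] {M : Matrix κ κ ℝ} {μ : ℝ} (hμ : μ ∈ spectrum ℝ M) :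
    Module.End.HasEigenvalue (toLin' (M.map ((↑) : ℝ → ℂ))) μ := by
  rw [Module.End.hasEigenvalue_iff_mem_spectrum]
  change _ ∈ spectrum ℂ (toLinAlgEquiv' _)
  rw [AlgEquiv.spectrum_eq, mem_spectrum_iff_isRoot_charpoly]
  rw [mem_spectrum_iff_isRoot_charpoly] at hμ
  rw [show M.map ((↑) : ℝ → ℂ) = M.map Complex.ofRealHom from rfl, charpoly_map]
  simpa using hμ.map (f := Complex.ofRealHom)

section Translation

variable {G κ : Type*} [Fintype κ]

theorem Matrix.mulVec_comp_vadd {α : Type*} [AddGroup G] [AddAction G κ]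
    [NonUnitalNonAssocSemiring α] {M : Matrix κ κ α}
    (hM : ∀ (g : G) i j, M (g +ᵥ i) (g +ᵥ j) = M i j) (g : G) (v : κ → α) :
    M *ᵥ (v ∘ (g +ᵥ ·)) = (M *ᵥ v) ∘ (g +ᵥ ·) := by
  have hsub : M.submatrix (AddAction.toPerm g) (AddAction.toPerm g) = M := by
    ext i j; exact hM g i j
  conv_lhs => rw [← hsub]
  rw [submatrix_mulVec_equiv]
  congr 2
  funext i
  simp [AddAction.toPerm]

theorem norm_apply_vadd_eq_of_comp_vadd_eq_smul {𝕜 : Type*} [NormedField 𝕜] [AddGroup G]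
    [AddAction G κ] {v : κ → 𝕜} (hv : v ≠ 0) {g : G} {c : 𝕜} (h : v ∘ (g +ᵥ ·) = c • v)
    (i : κ) : ‖v (g +ᵥ i)‖ = ‖v i‖ := by
  have hpos : 0 < ∑ i, ‖v i‖ := by
    obtain ⟨j, hj⟩ := Function.ne_iff.1 hv
    exact Finset.sum_pos' (fun i _ => norm_nonneg _) ⟨j, Finset.mem_univ j, norm_pos_iff.2 hj⟩
  have hc : ‖c‖ = 1 := by
    have hsum : ∑ i, ‖v (g +ᵥ i)‖ = ∑ i, ‖v i‖ :=
      Equiv.sum_comp (AddAction.toPerm g) (fun i => ‖v i‖)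
    simp only [← Function.comp_apply (f := v), h, Pi.smul_apply, smul_eq_mul, norm_mul,
      ← Finset.mul_sum] at hsum
    exact (mul_eq_right₀ hpos.ne').1 hsum
  rw [← Function.comp_apply (f := v), h, Pi.smul_apply, smul_eq_mul, norm_mul, hc, one_mul]

theorem Matrix.exists_eigenvector_forall_norm_vadd_eq [AddCommGroup G] [Finite G] [AddAction G κ]
    [DecidableEq κ] {M : Matrix κ κ ℂ} (hM : ∀ (g : G) i j, M (g +ᵥ i) (g +ᵥ j) = M i j)
    {μ : ℂ} (hμ : Module.End.HasEigenvalue (toLin' M) μ) :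
    ∃ v ≠ 0, M *ᵥ v = μ • v ∧ ∀ (g : G) i, ‖v (g +ᵥ i)‖ = ‖v i‖ := by
  let T : G → Module.End ℂ (κ → ℂ) := fun g => LinearMap.funLeft ℂ ℂ (g +ᵥ ·)
  have hT : ∀ g h, Commute (T g) (T h) := fun g h => LinearMap.ext fun v => funext fun i => by
    simp [T, LinearMap.funLeft, vadd_vadd, add_comm]
  have hMT : ∀ g, Commute (toLin' M) (T g) := fun g => LinearMap.ext fun v => by
    simp [T, LinearMap.funLeft, Matrix.mulVec_comp_vadd hM]
  obtain ⟨v, hvμ, hv0, hvT⟩ := Module.End.exists_common_eigenvector_mem T hT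
    (Module.End.hasEigenvalue_iff.1 hμ)
    (fun g => Module.End.mapsTo_genEigenspace_of_comm (hMT g) μ 1)
  refine ⟨v, hv0, by simpa using Module.End.mem_eigenspace_iff.1 hvμ, fun g => ?_⟩
  obtain ⟨c, hc⟩ := hvT g
  exact norm_apply_vadd_eq_of_comp_vadd_eq_smul hv0 hc

theorem Matrix.exists_unit_eigenvector_forall_norm_vadd_eq
    [AddCommGroup G] [Finite G] [AddAction G κ] [DecidableEq κ] {M : Matrix κ κ ℂ}
    (hM : ∀ (g : G) i j, M (g +ᵥ i) (g +ᵥ j) = M i j) {μ : ℂ}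
    (hμ : Module.End.HasEigenvalue (toLin' M) μ) :
    ∃ u, M *ᵥ u = μ • u ∧ ∑ i, ‖u i‖ ^ 2 = 1 ∧ ∀ (g : G) i, ‖u (g +ᵥ i)‖ = ‖u i‖ := by
  obtain ⟨v, hv0, hMv, hv⟩ := exists_eigenvector_forall_norm_vadd_eq hM hμ
  set S := ∑ i, ‖v i‖ ^ 2
  have hS : 0 < S := by
    obtain ⟨j, hj⟩ := Function.ne_iff.1 hv0
    exact Finset.sum_pos' (fun i _ => by positivity)
      ⟨j, Finset.mem_univ j, pow_pos (norm_pos_iff.2 hj) 2⟩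
  set c : ℂ := (((√S)⁻¹ : ℝ) : ℂ)
  have hc : ‖c‖ ^ 2 = S⁻¹ := by
    rw [Complex.norm_real, Real.norm_eq_abs, sq_abs, inv_pow, Real.sq_sqrt hS.le]
  refine ⟨c • v, by rw [mulVec_smul, hMv, smul_comm], ?_, fun g i => ?_⟩
  · simp only [Pi.smul_apply, smul_eq_mul, norm_mul, mul_pow, ← Finset.mul_sum, hc]
    exact inv_mul_cancel₀ hS.ne'
  · simp only [Pi.smul_apply, smul_eq_mul, norm_mul, hv]

theorem card_mul_norm_sq_le_of_norm_vadd_eq {E : Type*} [AddGroup G] [Fintype G]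
    [AddAction G κ] [Norm E] {u : κ → E} (hu : ∀ (g : G) i, ‖u (g +ᵥ i)‖ = ‖u i‖) {k : κ}
    (hk : Function.Injective (· +ᵥ k : G → κ)) :
    Fintype.card G * ‖u k‖ ^ 2 ≤ ∑ i, ‖u i‖ ^ 2 := by
  classical
  calc Fintype.card G * ‖u k‖ ^ 2 = ∑ g : G, ‖u (g +ᵥ k)‖ ^ 2 := by simp [hu]
    _ = ∑ i ∈ Finset.univ.image (· +ᵥ k), ‖u i‖ ^ 2 := by
      rw [Finset.sum_image fun _ _ _ _ h => hk h]
    _ ≤ ∑ i, ‖u i‖ ^ 2 :=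
      Finset.sum_le_sum_of_subset_of_nonneg (Finset.subset_univ _) fun _ _ _ => by positivity

end Translation

/-- Every eigenvalue of `Q̃_{n1,n2}(θ)` admits a unit eigenvector all of whose
entries have absolute value at most `√2/√(n1·n2)`. -/
theorem eigenvector_entry_bound (n1 n2 : ℕ) (h1 : 3 ≤ n1) (h2 : 3 ≤ n2)
    (φ ρ11 ρ12 ρ21 ρ22 : ℝ) (μ : ℝ)
    (hμ : μ ∈ spectrum ℝ (Qcmat n1 n2 φ ρ11 ρ12 ρ21 ρ22)) :
    ∃ u : (Fin n2 × Fin n1) ⊕ (Fin n2 × Fin n1) → ℂ,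
      ((Qcmat n1 n2 φ ρ11 ρ12 ρ21 ρ22).map (fun t : ℝ => (t : ℂ))) *ᵥ u = (μ : ℂ) • u ∧
      ∑ k, ‖u k‖ ^ 2 = 1 ∧
      ∀ k, ‖u k‖ ≤ Real.sqrt 2 / Real.sqrt (n1 * n2) := by
  have : NeZero n1 := ⟨by omega⟩
  have : NeZero n2 := ⟨by omega⟩
  obtain ⟨u, hMu, hu, hvadd⟩ := exists_unit_eigenvector_forall_norm_vadd_eq
    (G := Fin n2 × Fin n1) (fun g i j => by simp only [map_apply, Qcmat_vadd_vadd])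
    (hasEigenvalue_toLin'_map_ofReal_of_mem_spectrum hμ)
  refine ⟨u, hMu, hu, fun k => ?_⟩
  have hfree : Function.Injective (· +ᵥ k : Fin n2 × Fin n1 → _) := fun g h hgh => by
    cases k <;> simpa using hgh
  have hk := card_mul_norm_sq_le_of_norm_vadd_eq hvadd hfree
  rw [hu, Fintype.card_prod, Fintype.card_fin, Fintype.card_fin] at hk
  have hpos : (0 : ℝ) < n1 * n2 := by positivity
  calc ‖u k‖ ≤ 1 / √(n1 * n2) := by
        rw [le_div_iff₀ (Real.sqrt_pos.2 hpos), ← Real.sqrt_sq (norm_nonneg (u k)),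
          ← Real.sqrt_mul (sq_nonneg _), ← Real.sqrt_one]
        exact Real.sqrt_le_sqrt (by push_cast at hk; linarith)
    _ ≤ √2 / √(n1 * n2) := by gcongr; exact Real.one_le_sqrt.2 one_le_two
end

section
/- Fix integers n1, n2 ≥ 3 and θ = (φ, ρ11, ρ12, ρ21, ρ22) ∈ ℝ^5, and set K = max(|ρ11|, |ρ12|, |ρ21|, |ρ22|). For every vector u ∈ ℂ^{2n} with ‖u‖₂ = 1, Q̃_{n1,n2}(θ)·u = λ_min(Q̃_{n1,n2}(θ))·u, and |u_k| ≤ √2/√(n1·n2) for every index k, it holds that |u* Q_{n1,n2}(θ) u − λ_min(Q̃_{n1,n2}(θ))| ≤ 16·K·(n1+n2)/(n1·n2); in particular this difference tends to 0 as n1, n2 → ∞. -/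
open Matrix

/-!
`Q` and `Q̃` differ only in the wrap-around entries that join opposite edges of the torus:
in each of the four blocks, `2 (n1 + n2)` entries of absolute value at most `K`, so the entrywise
`ℓ¹`-norm of `Q - Q̃` is at most `8 K (n1 + n2)`. For a unit eigenvector `u` of `Q̃` for
`λ_min(Q̃)` one has `u* Q u - λ_min(Q̃) = u* (Q - Q̃) u`, whose modulus is at most
`(max_k |u_k|)² · Σ |Q - Q̃| ≤ 2 / (n1 n2) · 8 K (n1 + n2)`.
-/

lemma fromBlocks_sub_fromBlocks {ι κ α : Type*} [Sub α] (A A' : Matrix ι ι α)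
    (B B' : Matrix ι κ α) (C C' : Matrix κ ι α) (D D' : Matrix κ κ α) :
    fromBlocks A B C D - fromBlocks A' B' C' D' =
      fromBlocks (A - A') (B - B') (C - C') (D - D') := by
  ext (i | i) (j | j) <;> rfl

section

variable {ι : Type*} [Fintype ι]

lemma star_dotProduct_self_of_sum_norm_sq {u : ι → ℂ} (hu : ∑ k, ‖u k‖ ^ 2 = 1) :
    star u ⬝ᵥ u = 1 := by
  simp only [dotProduct, Pi.star_apply, Complex.star_def, Complex.conj_mul']
  exact_mod_cast hu

lemma norm_star_dotProduct_map_ofReal_mulVec_le (M : Matrix ι ι ℝ) {u : ι → ℂ} {c : ℝ}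
    (hu : ∀ k, ‖u k‖ ≤ c) :
    ‖star u ⬝ᵥ (M.map ((↑) : ℝ → ℂ) *ᵥ u)‖ ≤ c ^ 2 * ∑ k, ∑ l, |M k l| := by
  calc ‖star u ⬝ᵥ (M.map ((↑) : ℝ → ℂ) *ᵥ u)‖
      ≤ ∑ k, ∑ l, ‖u k‖ * (|M k l| * ‖u l‖) := by
        simp only [dotProduct, mulVec, map_apply, Finset.mul_sum]
        refine (norm_sum_le _ _).trans (Finset.sum_le_sum fun k _ => (norm_sum_le _ _).trans ?_)
        simp
    _ ≤ ∑ k, ∑ l, c * (|M k l| * c) := by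
        gcongr with k _ l _
        · exact (norm_nonneg _).trans (hu k)
        · exact hu k
        · exact hu l
    _ = c ^ 2 * ∑ k, ∑ l, |M k l| := by
        simp only [Finset.mul_sum]
        ring_nf

lemma sum_sum_abs_fromBlocks {κ : Type*} [Fintype κ] (A : Matrix ι ι ℝ) (B : Matrix ι κ ℝ)
    (C : Matrix κ ι ℝ) (D : Matrix κ κ ℝ) :
    ∑ k, ∑ l, |fromBlocks A B C D k l| =
      ∑ i, ∑ j, |A i j| + ∑ i, ∑ j, |B i j| + ∑ i, ∑ j, |C i j| + ∑ i, ∑ j, |D i j| := by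
  simp only [Fintype.sum_sum_type, fromBlocks_apply₁₁, fromBlocks_apply₁₂, fromBlocks_apply₂₁,
    fromBlocks_apply₂₂, Finset.sum_add_distrib]
  ring

lemma sum_sum_abs_transpose (A : Matrix ι ι ℝ) :
    ∑ i, ∑ j, |Aᵀ i j| = ∑ i, ∑ j, |A i j| :=
  Finset.sum_comm

end

lemma sum_sum_ite_fst_eq {α β : Type*} [Fintype α] [Fintype β] [DecidableEq α] [DecidableEq β]
    (b b' : β) (r : ℝ) :
    ∑ p : α × β, ∑ q : α × β, (if q.1 = p.1 ∧ p.2 = b ∧ q.2 = b' then r else 0) =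
      Fintype.card α * r := by
  simp [Fintype.sum_prod_type, ite_and]

lemma sum_sum_ite_snd_eq {α β : Type*} [Fintype α] [Fintype β] [DecidableEq α] [DecidableEq β]
    (a a' : α) (r : ℝ) :
    ∑ p : α × β, ∑ q : α × β, (if q.2 = p.2 ∧ p.1 = a ∧ q.1 = a' then r else 0) =
      Fintype.card β * r := by
  simp only [Fintype.sum_prod_type, ite_and, Finset.sum_ite_eq', Finset.mem_univ, ↓reduceIte,
    Finset.sum_ite_irrel, Finset.sum_const_zero]
  rw [Finset.sum_comm]
  simp

lemma add_one_mod_eq_or {m t : ℕ} (ht : t < m) :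
    (t + 1) % m = t + 1 ∨ ((t + 1) % m = 0 ∧ t + 1 = m) := by
  rcases Nat.lt_or_ge (t + 1) m with h | h
  · exact Or.inl (Nat.mod_eq_of_lt h)
  · obtain rfl : t + 1 = m := by omega
    exact Or.inr ⟨Nat.mod_self _, rfl⟩

/-- The two `if`s are the entries of `T` and of `C` along one coordinate direction. -/
lemma abs_path_sub_cycle_le {n b b' : ℕ} (hn : 3 ≤ n) (hb : b < n) (hb' : b' < n) (x z : ℝ) :
    |(if b' = b + 1 then z else if b' + 1 = b then x else 0) -
        (if b' = (b + 1) % n then z else if (b' + 1) % n = b then x else 0)| ≤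
      (if b = n - 1 ∧ b' = 0 then |z| else 0) + (if b = 0 ∧ b' = n - 1 then |x| else 0) := by
  have := add_one_mod_eq_or hb
  have := add_one_mod_eq_or hb'
  generalize (b + 1) % n = c at *
  generalize (b' + 1) % n = c' at *
  split_ifs <;> first
    | (exfalso; omega)
    | (simp only [sub_self, zero_sub, abs_neg, abs_zero, add_zero, zero_add]
       first | exact le_rfl | positivity)

lemma abs_Tmat_sub_Cmat_apply_le {n1 n2 : ℕ} (h1 : 3 ≤ n1) (h2 : 3 ≤ n2) (x y z : ℝ)
    (p q : Fin n2 × Fin n1) :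
    |(Tmat n1 n2 x y z - Cmat n1 n2 x y z) p q| ≤
      (if q.1 = p.1 ∧ p.2 = ⟨n1 - 1, by omega⟩ ∧ q.2 = ⟨0, by omega⟩ then |z| else 0) +
      (if q.1 = p.1 ∧ p.2 = ⟨0, by omega⟩ ∧ q.2 = ⟨n1 - 1, by omega⟩ then |x| else 0) +
      ((if q.2 = p.2 ∧ p.1 = ⟨n2 - 1, by omega⟩ ∧ q.1 = ⟨0, by omega⟩ then |z| else 0) +
      (if q.2 = p.2 ∧ p.1 = ⟨0, by omega⟩ ∧ q.1 = ⟨n2 - 1, by omega⟩ then |x| else 0)) := by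
  rcases eq_or_ne q.1 p.1 with hA | hA <;> rcases eq_or_ne q.2 p.2 with hB | hB
  · obtain rfl : q = p := Prod.ext hA hB
    simp only [Cmat, Tmat, Matrix.sub_apply, ↓reduceIte, sub_self, abs_zero]
    positivity
  · simpa [Cmat, Tmat, hA, hB, Prod.ext_iff, Fin.eq_mk_iff_val_eq] using
      abs_path_sub_cycle_le h1 p.2.isLt q.2.isLt x z
  · simpa [Cmat, Tmat, hA, hB, Prod.ext_iff, Fin.eq_mk_iff_val_eq] using
      abs_path_sub_cycle_le h2 p.1.isLt q.1.isLt x z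
  · simp [Cmat, Tmat, hA, hB, Prod.ext_iff]

lemma sum_abs_Tmat_sub_Cmat_le {n1 n2 : ℕ} (h1 : 3 ≤ n1) (h2 : 3 ≤ n2) (x y z : ℝ) :
    ∑ p, ∑ q, |(Tmat n1 n2 x y z - Cmat n1 n2 x y z) p q| ≤ (|x| + |z|) * (n1 + n2) := by
  calc ∑ p, ∑ q, |(Tmat n1 n2 x y z - Cmat n1 n2 x y z) p q|
      ≤ n2 * |z| + n2 * |x| + (n1 * |z| + n1 * |x|) := by
        refine (Finset.sum_le_sum fun p _ => Finset.sum_le_sum fun q _ =>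
          abs_Tmat_sub_Cmat_apply_le h1 h2 x y z p q).trans_eq ?_
        simp only [Finset.sum_add_distrib, sum_sum_ite_fst_eq, sum_sum_ite_snd_eq,
          Fintype.card_fin]
    _ = (|x| + |z|) * (n1 + n2) := by ring

lemma sum_abs_Qmat_sub_Qcmat_le {n1 n2 : ℕ} (h1 : 3 ≤ n1) (h2 : 3 ≤ n2)
    (φ ρ11 ρ12 ρ21 ρ22 : ℝ) :
    ∑ k, ∑ l, |(Qmat n1 n2 φ ρ11 ρ12 ρ21 ρ22 - Qcmat n1 n2 φ ρ11 ρ12 ρ21 ρ22) k l| ≤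
      2 * (|ρ11| + |ρ12| + |ρ21| + |ρ22|) * (n1 + n2) := by
  rw [Qmat, Qcmat, fromBlocks_sub_fromBlocks, sum_sum_abs_fromBlocks, ← transpose_sub,
    sum_sum_abs_transpose]
  linarith [sum_abs_Tmat_sub_Cmat_le h1 h2 ρ11 1 ρ11, sum_abs_Tmat_sub_Cmat_le h1 h2 ρ21 φ ρ12,
    sum_abs_Tmat_sub_Cmat_le h1 h2 ρ22 1 ρ22]

/-- For a unit minimal eigenvector `u` of `Q̃_{n1,n2}(θ)` with uniformly small
entries, the quadratic form `u* Q u` differs from `λ_min(Q̃)` by at most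
`16·K·(n1+n2)/(n1·n2)`. -/
theorem quadratic_form_close_to_min_eigenvalue (n1 n2 : ℕ) (h1 : 3 ≤ n1) (h2 : 3 ≤ n2)
    (φ ρ11 ρ12 ρ21 ρ22 : ℝ) (K : ℝ) (hK : K = max |ρ11| (max |ρ12| (max |ρ21| |ρ22|)))
    (u : (Fin n2 × Fin n1) ⊕ (Fin n2 × Fin n1) → ℂ)
    (hnorm : ∑ k, ‖u k‖ ^ 2 = 1)
    (heig : ((Qcmat n1 n2 φ ρ11 ρ12 ρ21 ρ22).map (fun t : ℝ => (t : ℂ))) *ᵥ u =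
      (lamMin (Qcmat n1 n2 φ ρ11 ρ12 ρ21 ρ22) : ℂ) • u)
    (hu : ∀ k, ‖u k‖ ≤ Real.sqrt 2 / Real.sqrt (n1 * n2)) :
    ‖star u ⬝ᵥ
        (((Qmat n1 n2 φ ρ11 ρ12 ρ21 ρ22).map (fun t : ℝ => (t : ℂ))) *ᵥ u)
        - (lamMin (Qcmat n1 n2 φ ρ11 ρ12 ρ21 ρ22) : ℂ)‖
      ≤ 16 * K * (n1 + n2) / (n1 * n2) := by
  set L := lamMin (Qcmat n1 n2 φ ρ11 ρ12 ρ21 ρ22)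
  set Q := Qmat n1 n2 φ ρ11 ρ12 ρ21 ρ22
  set Qc := Qcmat n1 n2 φ ρ11 ρ12 ρ21 ρ22
  have hdiff : star u ⬝ᵥ (Q.map ((↑) : ℝ → ℂ) *ᵥ u) - L =
      star u ⬝ᵥ ((Q - Qc).map ((↑) : ℝ → ℂ) *ᵥ u) := by
    rw [Matrix.map_sub _ Complex.ofReal_sub, sub_mulVec, dotProduct_sub, heig, dotProduct_smul,
      star_dotProduct_self_of_sum_norm_sq hnorm, smul_eq_mul, mul_one]
  obtain ⟨h11, h12, h21, h22⟩ : |ρ11| ≤ K ∧ |ρ12| ≤ K ∧ |ρ21| ≤ K ∧ |ρ22| ≤ K := by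
    simp [hK]
  calc ‖star u ⬝ᵥ (Q.map ((↑) : ℝ → ℂ) *ᵥ u) - L‖
      ≤ (Real.sqrt 2 / Real.sqrt (n1 * n2)) ^ 2 * ∑ k, ∑ l, |(Q - Qc) k l| := by
        rw [hdiff]
        exact norm_star_dotProduct_map_ofReal_mulVec_le _ hu
    _ ≤ 2 / (n1 * n2) * (2 * (|ρ11| + |ρ12| + |ρ21| + |ρ22|) * (n1 + n2)) := by
        rw [div_pow, Real.sq_sqrt zero_le_two, Real.sq_sqrt (by positivity)]
        gcongr
        exact sum_abs_Qmat_sub_Qcmat_le h1 h2 φ ρ11 ρ12 ρ21 ρ22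
    _ ≤ 2 / (n1 * n2) * (8 * K * (n1 + n2)) := by
        gcongr _ * (?_ * _)
        linarith
    _ = 16 * K * (n1 + n2) / (n1 * n2) := by ring
end

section
/- Fix integers n1, n2 ≥ 3 and θ ∈ ℝ^5. Let ι be the injection sending an index (s,(a,b)) of Q_{n1,n2}(θ) (with s ∈ {1,2} labeling the block row, a ∈ {0,…,n2−1}, b ∈ {0,…,n1−1}) to the index (s,(a,b)) of Q̃_{2n1,2n2}(θ) (where now a ranges in {0,…,2n2−1} and b in {0,…,2n1−1}, via the natural inclusions). Then for all index pairs p, q of Q_{n1,n2}(θ): (Q_{n1,n2}(θ))_{p,q} = (Q̃_{2n1,2n2}(θ))_{ι(p),ι(q)}. In other words, Q_{n1,n2}(θ) is a principal submatrix of Q̃_{2n1,2n2}(θ). -/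
open Matrix

/-- The natural inclusion of the index set of `Q_{n1,n2}` into that of
`Q̃_{2n1,2n2}`. -/
def embIdx (n1 n2 : ℕ) :
    (Fin n2 × Fin n1) ⊕ (Fin n2 × Fin n1) →
      (Fin (2 * n2) × Fin (2 * n1)) ⊕ (Fin (2 * n2) × Fin (2 * n1)) :=
  Sum.map
    (Prod.map (Fin.castLE (by omega)) (Fin.castLE (by omega)))
    (Prod.map (Fin.castLE (by omega)) (Fin.castLE (by omega)))

/-- `Q_{n1,n2}(θ)` is a principal submatrix of `Q̃_{2n1,2n2}(θ)` via the natural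
inclusion of indices. -/
theorem precision_submatrix_of_doubled_circulant (n1 n2 : ℕ) (h1 : 3 ≤ n1) (h2 : 3 ≤ n2)
    (φ ρ11 ρ12 ρ21 ρ22 : ℝ) :
    ∀ p q : (Fin n2 × Fin n1) ⊕ (Fin n2 × Fin n1),
      Qmat n1 n2 φ ρ11 ρ12 ρ21 ρ22 p q =
        Qcmat (2 * n1) (2 * n2) φ ρ11 ρ12 ρ21 ρ22 (embIdx n1 n2 p) (embIdx n1 n2 q) := by
  have key : ∀ x y z : ℝ, ∀ p q : Fin n2 × Fin n1,
      Tmat n1 n2 x y z p q =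
        Cmat (2 * n1) (2 * n2) x y z
          (Prod.map (Fin.castLE (by omega)) (Fin.castLE (by omega)) p)
          (Prod.map (Fin.castLE (by omega)) (Fin.castLE (by omega)) q) := by
    rintro x y z ⟨pa, pb⟩ ⟨qa, qb⟩
    simp only [Tmat, Cmat, Prod.map, Prod.mk.injEq, Prod.ext_iff, Fin.ext_iff,
      Fin.coe_castLE]
    have hpa := pa.isLt; have hpb := pb.isLt
    have hqa := qa.isLt; have hqb := qb.isLt
    rw [Nat.mod_eq_of_lt (by omega), Nat.mod_eq_of_lt (by omega), Nat.mod_eq_of_lt (by omega), Nat.mod_eq_of_lt (by omega)]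
  rintro (⟨pa, pb⟩ | ⟨pa, pb⟩) (⟨qa, qb⟩ | ⟨qa, qb⟩) <;>
    simp only [Qmat, Qcmat, embIdx, Sum.map, Matrix.fromBlocks_apply₁₁,
      Matrix.fromBlocks_apply₁₂, Matrix.fromBlocks_apply₂₁, Matrix.fromBlocks_apply₂₂,
      Matrix.transpose_apply] <;> exact key _ _ _ _ _
end
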